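/- Let 0 < λ ≤ Λ. There exists a constant C > 0 depending only on λ and Λ such that for all measurable a, b : (0,1) → ℝ with λ ≤ a, b ≤ Λ a.e., one has ‖a - b‖_{L²(0,1)} ≤ C·(∫₀¹ (u_a'(x) - u_b'(x))² dx)^{1/9}, where u_a'(x) = -A(x)(x - γ_A) and u_b'(x) = -B(x)(x - γ_B) with A := 1/a, B := 1/b. (Equivalently, ‖a - b‖_{L²(0,1)} ≤ C‖u_a - u_b‖_{H¹₀(0,1)}^{2/9}.) -/

import Mathlib

open MeasureTheory Real Set

/-- The constant `γ_A = (∫₀¹ t A(t) dt) / (∫₀¹ A(t) dt)`. -/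
noncomputable def gammaOf (A : ℝ → ℝ) : ℝ :=
  (∫ t in (0:ℝ)..1, t * A t) / (∫ t in (0:ℝ)..1, A t)

/-!
Write `A = 1/a`, `B = 1/b`, `e = u_a' - u_b'`, `E = ‖e‖²` and `ℓ = |γ_A - γ_B|`; all `γ` lie in
`[0, 1]`. Between `γ_A` and `γ_B` the two terms of `e` have the same sign, so `|e| ≥ ℓ/Λ` there
and `ℓ³ ≤ Λ² E`. Away from the `δ`-neighbourhood of `γ_A`, the identity
`(A - B)(x - γ_A) = B (γ_A - γ_B) - e` gives `(A - B)² ≤ 2 (e² + ℓ²/λ²)/δ²`, while the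
neighbourhood contributes at most `2δ/λ²`. With `δ = E^{2/9}` this yields `‖A - B‖² ≲ E^{2/9}`,
and `|a - b| ≤ Λ² |A - B|` finishes the proof.
-/

-- `u_a'` in terms of `A = 1 / a`.
noncomputable def solDeriv (A : ℝ → ℝ) (x : ℝ) : ℝ := -A x * (x - gammaOf A)

lemma intervalIntegral_zero_one_eq_setIntegral_Ioo (f : ℝ → ℝ) :
    ∫ x in (0:ℝ)..1, f x = ∫ x in Ioo (0:ℝ) 1, f x := by
  rw [intervalIntegral.integral_of_le zero_le_one, integral_Ioc_eq_integral_Ioo]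

lemma gammaOf_mem_Icc {A : ℝ → ℝ} (hA : ∀ᵐ x ∂volume.restrict (Ioo (0:ℝ) 1), 0 ≤ A x) :
    gammaOf A ∈ Icc 0 1 := by
  rw [gammaOf, intervalIntegral_zero_one_eq_setIntegral_Ioo,
    intervalIntegral_zero_one_eq_setIntegral_Ioo]
  have hmem := ae_restrict_mem (μ := volume) measurableSet_Ioo (s := Ioo (0:ℝ) 1)
  have hxA : ∀ᵐ x ∂volume.restrict (Ioo (0:ℝ) 1), 0 ≤ x * A x := by
    filter_upwards [hA, hmem] with x hAx hx using mul_nonneg hx.1.le hAx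
  by_cases hint : IntegrableOn A (Ioo (0:ℝ) 1)
  · have hle : ∫ x in Ioo (0:ℝ) 1, x * A x ≤ ∫ x in Ioo (0:ℝ) 1, A x := by
      refine integral_mono_of_nonneg hxA hint ?_
      filter_upwards [hA, hmem] with x hAx hx using mul_le_of_le_one_left hAx hx.2.le
    exact ⟨div_nonneg (integral_nonneg_of_ae hxA) (integral_nonneg_of_ae hA),
      div_le_one_of_le₀ hle (integral_nonneg_of_ae hA)⟩
  · simp [integral_undef hint]

lemma sq_mul_sub_le_sq_solDeriv_sub {A B : ℝ → ℝ} {α x : ℝ} (hα : 0 ≤ α) (hAx : α ≤ A x)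
    (hBx : α ≤ B x) (hx : x ∈ Icc (gammaOf A) (gammaOf B)) :
    (α * (gammaOf B - gammaOf A)) ^ 2 ≤ (solDeriv A x - solDeriv B x) ^ 2 := by
  have hgap : α * (gammaOf B - gammaOf A) ≤ A x * (x - gammaOf A) + B x * (gammaOf B - x) := by
    nlinarith [hx.1, hx.2]
  rw [← neg_sq (solDeriv A x - solDeriv B x)]
  exact pow_le_pow_left₀ (mul_nonneg hα (by linarith [hx.1, hx.2]))
    (by unfold solDeriv; linarith) 2

lemma mul_abs_gammaOf_sub_pow_three_le {A B : ℝ → ℝ} {α : ℝ} (hα : 0 ≤ α)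
    (hA : ∀ᵐ x ∂volume.restrict (Ioo (0:ℝ) 1), α ≤ A x)
    (hB : ∀ᵐ x ∂volume.restrict (Ioo (0:ℝ) 1), α ≤ B x)
    (hint : IntegrableOn (fun x => (solDeriv A x - solDeriv B x) ^ 2) (Ioo (0:ℝ) 1)) :
    α ^ 2 * |gammaOf A - gammaOf B| ^ 3 ≤
      ∫ x in Ioo (0:ℝ) 1, (solDeriv A x - solDeriv B x) ^ 2 := by
  wlog hle : gammaOf A ≤ gammaOf B generalizing A B
  · simp only [sub_sq_comm (solDeriv A _), abs_sub_comm (gammaOf A)] at hint ⊢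
    exact this hB hA hint (le_of_not_ge hle)
  have hsub : Ioo (gammaOf A) (gammaOf B) ⊆ Ioo 0 1 :=
    Ioo_subset_Ioo (gammaOf_mem_Icc (hA.mono fun x hx => hα.trans hx)).1
      (gammaOf_mem_Icc (hB.mono fun x hx => hα.trans hx)).2
  have hpt : ∀ᵐ x ∂volume.restrict (Ioo (gammaOf A) (gammaOf B)),
      (α * (gammaOf B - gammaOf A)) ^ 2 ≤ (solDeriv A x - solDeriv B x) ^ 2 := by
    filter_upwards [ae_restrict_of_ae_restrict_of_subset hsub hA,
      ae_restrict_of_ae_restrict_of_subset hsub hB, ae_restrict_mem measurableSet_Ioo]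
      with x hAx hBx hx
    exact sq_mul_sub_le_sq_solDeriv_sub hα hAx hBx (Ioo_subset_Icc_self hx)
  calc α ^ 2 * |gammaOf A - gammaOf B| ^ 3
      = ∫ _ in Ioo (gammaOf A) (gammaOf B), (α * (gammaOf B - gammaOf A)) ^ 2 := by
        rw [setIntegral_const, Real.volume_real_Ioo_of_le hle, abs_sub_comm,
          abs_of_nonneg (sub_nonneg.2 hle), smul_eq_mul]
        ring
    _ ≤ ∫ x in Ioo (gammaOf A) (gammaOf B), (solDeriv A x - solDeriv B x) ^ 2 :=
        integral_mono_ae (integrableOn_const (by simp)) (hint.mono_set hsub) hpt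
    _ ≤ ∫ x in Ioo (0:ℝ) 1, (solDeriv A x - solDeriv B x) ^ 2 :=
        setIntegral_mono_set hint (Filter.Eventually.of_forall fun _ => sq_nonneg _)
          hsub.eventuallyLE

lemma sq_sub_le_sq_of_mem_Icc {p q β : ℝ} (hp : p ∈ Icc 0 β) (hq : q ∈ Icc 0 β) :
    (p - q) ^ 2 ≤ β ^ 2 := by
  simpa only [sq_abs] using
    pow_le_pow_left₀ (abs_nonneg _) (abs_sub_le_of_nonneg_of_le hp.1 hp.2 hq.1 hq.2) 2

lemma sq_sub_le_solDeriv_add_indicator {A B : ℝ → ℝ} {β δ x : ℝ} (hδ : 0 < δ)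
    (hAx : A x ∈ Icc 0 β) (hBx : B x ∈ Icc 0 β) :
    (A x - B x) ^ 2 ≤
      2 / δ ^ 2 * ((solDeriv A x - solDeriv B x) ^ 2 + β ^ 2 * (gammaOf A - gammaOf B) ^ 2) +
        (Ioo (gammaOf A - δ) (gammaOf A + δ)).indicator (fun _ => β ^ 2) x := by
  by_cases hx : x ∈ Ioo (gammaOf A - δ) (gammaOf A + δ)
  · rw [indicator_of_mem hx]
    have : 0 ≤ 2 / δ ^ 2 * ((solDeriv A x - solDeriv B x) ^ 2 +
        β ^ 2 * (gammaOf A - gammaOf B) ^ 2) := by positivity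
    linarith [sq_sub_le_sq_of_mem_Icc hAx hBx]
  · rw [indicator_of_notMem hx, add_zero, div_mul_eq_mul_div, le_div_iff₀ (by positivity)]
    have hfar : δ ^ 2 ≤ (x - gammaOf A) ^ 2 := by
      rw [mem_Ioo, not_and_or, not_lt, not_lt] at hx
      rcases hx with hx | hx <;> nlinarith
    have hsplit : (A x - B x) * (x - gammaOf A) =
        (solDeriv B x - solDeriv A x) + B x * (gammaOf A - gammaOf B) := by
      unfold solDeriv; ring
    have hB2 : B x ^ 2 ≤ β ^ 2 := pow_le_pow_left₀ hBx.1 hBx.2 2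
    calc (A x - B x) ^ 2 * δ ^ 2 ≤ ((A x - B x) * (x - gammaOf A)) ^ 2 := by
          rw [mul_pow]; exact mul_le_mul_of_nonneg_left hfar (sq_nonneg _)
      _ ≤ 2 * ((solDeriv A x - solDeriv B x) ^ 2 + β ^ 2 * (gammaOf A - gammaOf B) ^ 2) := by
          rw [hsplit]
          nlinarith [sq_nonneg (solDeriv B x - solDeriv A x - B x * (gammaOf A - gammaOf B)),
            mul_le_mul_of_nonneg_right hB2 (sq_nonneg (gammaOf A - gammaOf B))]

lemma integral_sq_sub_le_solDeriv_add {A B : ℝ → ℝ} {β δ : ℝ} (hδ : 0 < δ)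
    (hA : ∀ᵐ x ∂volume.restrict (Ioo (0:ℝ) 1), A x ∈ Icc 0 β)
    (hB : ∀ᵐ x ∂volume.restrict (Ioo (0:ℝ) 1), B x ∈ Icc 0 β)
    (hint : IntegrableOn (fun x => (solDeriv A x - solDeriv B x) ^ 2) (Ioo (0:ℝ) 1)) :
    ∫ x in Ioo (0:ℝ) 1, (A x - B x) ^ 2 ≤
      2 / δ ^ 2 * ((∫ x in Ioo (0:ℝ) 1, (solDeriv A x - solDeriv B x) ^ 2) +
        β ^ 2 * (gammaOf A - gammaOf B) ^ 2) + 2 * δ * β ^ 2 := by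
  set s := Ioo (gammaOf A - δ) (gammaOf A + δ)
  have hconst : IntegrableOn (fun _ => β ^ 2 * (gammaOf A - gammaOf B) ^ 2) (Ioo (0:ℝ) 1) :=
    integrableOn_const (by simp)
  have hind : IntegrableOn (s.indicator fun _ => β ^ 2) (Ioo (0:ℝ) 1) :=
    (integrableOn_const (by simp)).indicator measurableSet_Ioo
  have hmain : IntegrableOn (fun x => 2 / δ ^ 2 * ((solDeriv A x - solDeriv B x) ^ 2 +
      β ^ 2 * (gammaOf A - gammaOf B) ^ 2)) (Ioo (0:ℝ) 1) := (hint.add hconst).const_mul _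
  have hmono : ∫ x in Ioo (0:ℝ) 1, (A x - B x) ^ 2 ≤ ∫ x in Ioo (0:ℝ) 1,
      (2 / δ ^ 2 * ((solDeriv A x - solDeriv B x) ^ 2 + β ^ 2 * (gammaOf A - gammaOf B) ^ 2) +
        s.indicator (fun _ => β ^ 2) x) :=
    integral_mono_of_nonneg (ae_of_all _ fun _ => sq_nonneg _)
      (hmain.add hind)
      (by filter_upwards [hA, hB] with x hAx hBx using sq_sub_le_solDeriv_add_indicator hδ hAx hBx)
  have hs : (volume.restrict (Ioo (0:ℝ) 1)).real s ≤ 2 * δ := by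
    rw [measureReal_restrict_apply measurableSet_Ioo]
    refine (measureReal_mono inter_subset_left measure_Ioo_lt_top.ne).trans_eq ?_
    rw [Real.volume_real_Ioo_of_le (by linarith)]
    ring
  rw [integral_add hmain hind, integral_const_mul,
    integral_add hint hconst, setIntegral_const, Real.volume_real_Ioo_of_le zero_le_one, sub_zero,
    one_smul, integral_indicator_const _ measurableSet_Ioo, smul_eq_mul] at hmono
  nlinarith [mul_le_mul_of_nonneg_right hs (sq_nonneg β)]

lemma abs_solDeriv_le {A : ℝ → ℝ} {β x : ℝ} (hAx : A x ∈ Icc 0 β) (hx : x ∈ Icc 0 1)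
    (hγ : gammaOf A ∈ Icc 0 1) : |solDeriv A x| ≤ β := by
  have hdist : |x - gammaOf A| ≤ 1 := abs_sub_le_of_nonneg_of_le hx.1 hx.2 hγ.1 hγ.2
  rw [solDeriv, abs_mul, abs_neg, abs_of_nonneg hAx.1]
  nlinarith [abs_nonneg (x - gammaOf A), hAx.1, hAx.2]

lemma integrableOn_sq_solDeriv_sub {A B : ℝ → ℝ} {β : ℝ} (hmA : Measurable A)
    (hmB : Measurable B) (hA : ∀ᵐ x ∂volume.restrict (Ioo (0:ℝ) 1), A x ∈ Icc 0 β)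
    (hB : ∀ᵐ x ∂volume.restrict (Ioo (0:ℝ) 1), B x ∈ Icc 0 β) :
    IntegrableOn (fun x => (solDeriv A x - solDeriv B x) ^ 2) (Ioo (0:ℝ) 1) := by
  have hγA := gammaOf_mem_Icc (hA.mono fun _ hx => hx.1)
  have hγB := gammaOf_mem_Icc (hB.mono fun _ hx => hx.1)
  refine Measure.integrableOn_of_bounded (M := (β + β) ^ 2) (by simp)
    (by unfold solDeriv; fun_prop) ?_
  filter_upwards [hA, hB, ae_restrict_mem measurableSet_Ioo] with x hAx hBx hx
  rw [Real.norm_eq_abs, abs_pow]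
  exact pow_le_pow_left₀ (abs_nonneg _) ((abs_sub _ _).trans (add_le_add
    (abs_solDeriv_le hAx (Ioo_subset_Icc_self hx) hγA)
    (abs_solDeriv_le hBx (Ioo_subset_Icc_self hx) hγB))) 2

lemma le_mul_of_forall_le_div_sq_add {J c t : ℝ} (ht : 0 ≤ t)
    (h : ∀ δ > 0, J ≤ c * t ^ 3 / δ ^ 2 + c * δ) : J ≤ 2 * c * t := by
  rcases ht.eq_or_lt with rfl | ht
  · have hlim : Filter.Tendsto (fun δ => c * 0 ^ 3 / δ ^ 2 + c * δ) (nhdsWithin 0 (Ioi 0))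
        (nhds 0) := by
      simpa using ((continuous_const_mul c).tendsto 0).mono_left nhdsWithin_le_nhds
    simpa using ge_of_tendsto hlim (eventually_nhdsWithin_of_forall h)
  · calc J ≤ c * t ^ 3 / t ^ 2 + c * t := h t ht
      _ = 2 * c * t := by field_simp; ring

lemma sq_mul_sq_le_of_sq_mul_pow_three_le {α ℓ s : ℝ} (hℓ : 0 ≤ ℓ) (hs : 0 ≤ s)
    (h : α ^ 2 * ℓ ^ 3 ≤ s ^ 9) : α ^ 2 * ℓ ^ 2 ≤ (1 + α ^ 2) * s ^ 6 := by
  rcases le_or_gt ℓ (s ^ 3) with hsmall | hlarge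
  · have : ℓ ^ 2 ≤ s ^ 6 := by
      simpa only [← pow_mul] using pow_le_pow_left₀ hℓ hsmall 2
    nlinarith [sq_nonneg α]
  · have hℓ0 : 0 < ℓ := (pow_nonneg hs 3).trans_lt hlarge
    have : α ^ 2 * ℓ ^ 2 ≤ s ^ 6 := by
      refine le_of_mul_le_mul_right ?_ hℓ0
      nlinarith [pow_nonneg hs 6]
    nlinarith [sq_nonneg α, pow_nonneg hs 6]

lemma integral_sq_sub_le_sq {A B : ℝ → ℝ} {β : ℝ}
    (hA : ∀ᵐ x ∂volume.restrict (Ioo (0:ℝ) 1), A x ∈ Icc 0 β)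
    (hB : ∀ᵐ x ∂volume.restrict (Ioo (0:ℝ) 1), B x ∈ Icc 0 β) :
    ∫ x in Ioo (0:ℝ) 1, (A x - B x) ^ 2 ≤ β ^ 2 := by
  have h := integral_mono_of_nonneg (ae_of_all _ fun x => sq_nonneg (A x - B x))
    (integrableOn_const (C := β ^ 2) (μ := volume) measure_Ioo_lt_top.ne)
    (by filter_upwards [hA, hB] with x hAx hBx using sq_sub_le_sq_of_mem_Icc hAx hBx)
  rwa [setIntegral_const, Real.volume_real_Ioo_of_le zero_le_one, sub_zero, one_smul] at h

lemma integral_sq_sub_le_mul_rpow {A B : ℝ → ℝ} {α β : ℝ} (hα : 0 < α) (hmA : Measurable A)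
    (hmB : Measurable B) (hA : ∀ᵐ x ∂volume.restrict (Ioo (0:ℝ) 1), A x ∈ Icc α β)
    (hB : ∀ᵐ x ∂volume.restrict (Ioo (0:ℝ) 1), B x ∈ Icc α β) :
    ∫ x in Ioo (0:ℝ) 1, (A x - B x) ^ 2 ≤ 4 * (1 + β ^ 2 + (β / α) ^ 2) *
      ((∫ x in Ioo (0:ℝ) 1, (solDeriv A x - solDeriv B x) ^ 2) ^ ((1:ℝ) / 9)) ^ 2 := by
  have hA₀ : ∀ᵐ x ∂volume.restrict (Ioo (0:ℝ) 1), A x ∈ Icc 0 β :=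
    hA.mono fun _ hx => ⟨hα.le.trans hx.1, hx.2⟩
  have hB₀ : ∀ᵐ x ∂volume.restrict (Ioo (0:ℝ) 1), B x ∈ Icc 0 β :=
    hB.mono fun _ hx => ⟨hα.le.trans hx.1, hx.2⟩
  have hint := integrableOn_sq_solDeriv_sub hmA hmB hA₀ hB₀
  set E := ∫ x in Ioo (0:ℝ) 1, (solDeriv A x - solDeriv B x) ^ 2
  set s := E ^ ((1:ℝ) / 9)
  set k := 1 + β ^ 2 + (β / α) ^ 2
  have hE₀ : 0 ≤ E := integral_nonneg fun _ => sq_nonneg _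
  have hs : 0 ≤ s := rpow_nonneg hE₀ _
  have hE : E = s ^ 9 := by
    rw [← rpow_natCast, ← rpow_mul hE₀]; norm_num
  have hβk : β ^ 2 ≤ k := by nlinarith [sq_nonneg (β / α)]
  rcases le_or_gt s 1 with hs1 | hs1
  · have hgap : α ^ 2 * |gammaOf A - gammaOf B| ^ 3 ≤ s ^ 9 :=
      hE ▸ mul_abs_gammaOf_sub_pow_three_le hα.le (hA.mono fun _ hx => hx.1)
        (hB.mono fun _ hx => hx.1) hint
    have hℓ := sq_mul_sq_le_of_sq_mul_pow_three_le (abs_nonneg _) hs hgap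
    rw [sq_abs] at hℓ
    have hk : E + β ^ 2 * (gammaOf A - gammaOf B) ^ 2 ≤ k * (s ^ 2) ^ 3 := by
      have hs96 : s ^ 9 ≤ s ^ 6 := pow_le_pow_of_le_one hs hs1 (by norm_num)
      have hβℓ : β ^ 2 * (gammaOf A - gammaOf B) ^ 2 =
          (β / α) ^ 2 * (α ^ 2 * (gammaOf A - gammaOf B) ^ 2) := by
        field_simp
      rw [hβℓ, hE, ← pow_mul]
      nlinarith [mul_le_mul_of_nonneg_left hℓ (sq_nonneg (β / α))]
    refine (le_mul_of_forall_le_div_sq_add (c := 2 * k) (sq_nonneg s) fun δ hδ => ?_).trans_eq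
      (by ring)
    calc ∫ x in Ioo (0:ℝ) 1, (A x - B x) ^ 2
        ≤ 2 / δ ^ 2 * (E + β ^ 2 * (gammaOf A - gammaOf B) ^ 2) + 2 * δ * β ^ 2 :=
          integral_sq_sub_le_solDeriv_add hδ hA₀ hB₀ hint
      _ ≤ 2 / δ ^ 2 * (k * (s ^ 2) ^ 3) + 2 * δ * k := by gcongr
      _ = 2 * k * (s ^ 2) ^ 3 / δ ^ 2 + 2 * k * δ := by ring
  · calc ∫ x in Ioo (0:ℝ) 1, (A x - B x) ^ 2 ≤ β ^ 2 := integral_sq_sub_le_sq hA₀ hB₀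
      _ ≤ 4 * k * s ^ 2 := by nlinarith [one_le_pow₀ (n := 2) hs1.le]

lemma one_div_mem_Icc_of_mem_Icc {lam Lam c : ℝ} (hlam : 0 < lam) (hc : c ∈ Icc lam Lam) :
    1 / c ∈ Icc (1 / Lam) (1 / lam) :=
  ⟨one_div_le_one_div_of_le (hlam.trans_le hc.1) hc.2, one_div_le_one_div_of_le hlam hc.1⟩

lemma sq_sub_le_pow_four_mul_sq_one_div_sub {p q Lam : ℝ} (hp : 0 < p) (hq : 0 < q)
    (hpL : p ≤ Lam) (hqL : q ≤ Lam) : (p - q) ^ 2 ≤ Lam ^ 4 * (1 / p - 1 / q) ^ 2 := by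
  have hpq : (p - q) ^ 2 = (p * q) ^ 2 * (1 / p - 1 / q) ^ 2 := by
    field_simp; ring
  rw [hpq]
  gcongr
  calc (p * q) ^ 2 ≤ (Lam * Lam) ^ 2 :=
        pow_le_pow_left₀ (by positivity) (mul_le_mul hpL hqL hq.le (hp.le.trans hpL)) 2
    _ = Lam ^ 4 := by ring

lemma integral_sq_sub_le_pow_four_mul {a b : ℝ → ℝ} {lam Lam : ℝ} (hlam : 0 < lam)
    (hma : Measurable a) (hmb : Measurable b)
    (ha : ∀ᵐ x ∂volume.restrict (Ioo (0:ℝ) 1), a x ∈ Icc lam Lam)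
    (hb : ∀ᵐ x ∂volume.restrict (Ioo (0:ℝ) 1), b x ∈ Icc lam Lam) :
    ∫ x in Ioo (0:ℝ) 1, (a x - b x) ^ 2 ≤
      Lam ^ 4 * ∫ x in Ioo (0:ℝ) 1, (1 / a x - 1 / b x) ^ 2 := by
  have hint : IntegrableOn (fun x => (1 / a x - 1 / b x) ^ 2) (Ioo (0:ℝ) 1) := by
    refine Measure.integrableOn_of_bounded (M := (1 / lam) ^ 2) measure_Ioo_lt_top.ne
      (by fun_prop) ?_
    filter_upwards [ha, hb] with x hax hbx
    have hpos : ∀ c ∈ Icc lam Lam, 1 / c ∈ Icc 0 (1 / lam) := fun c hc =>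
      ⟨(one_div_pos.2 (hlam.trans_le hc.1)).le, (one_div_mem_Icc_of_mem_Icc hlam hc).2⟩
    rw [Real.norm_of_nonneg (sq_nonneg _)]
    exact sq_sub_le_sq_of_mem_Icc (hpos _ hax) (hpos _ hbx)
  rw [← integral_const_mul]
  refine integral_mono_of_nonneg (ae_of_all _ fun _ => sq_nonneg _) (hint.const_mul _) ?_
  filter_upwards [ha, hb] with x hax hbx
  exact sq_sub_le_pow_four_mul_sq_one_div_sub (hlam.trans_le hax.1) (hlam.trans_le hbx.1)
    hax.2 hbx.2

/-- Theorem 6.3 of the paper: there is `C = C(λ,Λ) > 0` such that for all measurable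
`a, b` with `λ ≤ a, b ≤ Λ` a.e. on `(0,1)`,
`‖a - b‖_{L²(0,1)} ≤ C (∫₀¹ (u_a' - u_b')²)^{1/9} = C ‖u_a - u_b‖_{H¹₀(0,1)}^{2/9}`,
where `u_a'(x) = -(1/a(x))(x - γ_A)` and `u_b'(x) = -(1/b(x))(x - γ_B)`. -/
theorem stmt5 (lam Lam : ℝ) (hlam : 0 < lam) (hlL : lam ≤ Lam) :
    ∃ C : ℝ, 0 < C ∧
      ∀ a b : ℝ → ℝ, Measurable a → Measurable b →
        (∀ᵐ x ∂(volume.restrict (Ioo (0:ℝ) 1)), lam ≤ a x ∧ a x ≤ Lam) →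
        (∀ᵐ x ∂(volume.restrict (Ioo (0:ℝ) 1)), lam ≤ b x ∧ b x ≤ Lam) →
        (∫ x in (0:ℝ)..1, (a x - b x) ^ 2) ^ ((1:ℝ)/2) ≤
          C * (∫ x in (0:ℝ)..1,
              ((-(1 / a x)) * (x - gammaOf (fun t => 1 / a t))
                - (-(1 / b x)) * (x - gammaOf (fun t => 1 / b t))) ^ 2) ^ ((1:ℝ)/9) := by
  have hLam : 0 < Lam := hlam.trans_le hlL
  set K := 4 * (1 + (1 / lam) ^ 2 + (1 / lam / (1 / Lam)) ^ 2)
  refine ⟨Lam ^ 2 * √K, by positivity, fun a b hma hmb ha hb => ?_⟩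
  have hA := ha.mono fun x hx => one_div_mem_Icc_of_mem_Icc hlam hx
  have hB := hb.mono fun x hx => one_div_mem_Icc_of_mem_Icc hlam hx
  have hstab := integral_sq_sub_le_mul_rpow (A := fun t => 1 / a t) (B := fun t => 1 / b t)
    (one_div_pos.2 hLam) (by fun_prop) (by fun_prop) hA hB
  have hconv := integral_sq_sub_le_pow_four_mul hlam hma hmb ha hb
  rw [intervalIntegral_zero_one_eq_setIntegral_Ioo, intervalIntegral_zero_one_eq_setIntegral_Ioo,
    ← sqrt_eq_rpow, sqrt_le_left (by positivity), mul_pow, mul_pow, ← pow_mul,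
    sq_sqrt (by positivity)]
  calc _ ≤ _ := hconv
    _ ≤ _ := mul_le_mul_of_nonneg_left hstab (by positivity)
    _ = _ := by unfold solDeriv; ring
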